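/- Let a : [−d,0] → M^{h×n} (real h×n matrices) be such that every entry of a has an absolutely continuous representative with a.e. derivative in L²([−d,0];ℝ) and a(−d) = 0. Then there exists a constant C > 0 such that for all (x₀,x₁) ∈ X: |∫_{−d}^0 a(ξ) x₁(ξ) dξ| ≤ C |T(x₀,x₁)|_X = C |x|_{−1}. -/

import Mathlib

/-!
Write `a(ξ) = ∫_{-d}^ξ a'(s) ds`. Exchanging the order of integration over the triangle
`-d ≤ s ≤ ξ ≤ 0` gives `∫ a(ξ) x₁(ξ) dξ = ∫ a'(s) (∫_s^0 x₁) ds`, and by the formula for `T` the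
tail integral `∫_s^0 x₁` is `y₀ - y₁(s)`, where `(y₀, y₁) = Tx`. Cauchy–Schwarz in `L²` then bounds
every entry by `‖a'ᵢⱼ‖₂ (√d |y₀| + ‖y₁‖₂) ≤ ‖a'ᵢⱼ‖₂ (√d + 1) ‖Tx‖`.
-/

open MeasureTheory Set
open scoped RealInnerProductSpace ENNReal

noncomputable section

/-- The "present" space `ℝⁿ`. -/
abbrev En (n : ℕ) := EuclideanSpace ℝ (Fin n)

/-- Lebesgue measure restricted to `[-d, 0]`. -/
def muD (d : ℝ) : Measure ℝ := volume.restrict (Icc (-d) 0)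

/-- The Hilbert space `X = ℝⁿ × L²([-d,0];ℝⁿ)` with the Hilbertian product norm. -/
abbrev Xsp (d : ℝ) (n : ℕ) := WithLp 2 (En n × Lp (En n) 2 (muD d))

/-- First (present) component of an element of `X`. -/
def fstX {d : ℝ} {n : ℕ} (x : Xsp d n) : En n := (WithLp.equiv 2 _ x).1

/-- Second (past) component of an element of `X`. -/
def sndX {d : ℝ} {n : ℕ} (x : Xsp d n) : Lp (En n) 2 (muD d) := (WithLp.equiv 2 _ x).2

/-- `T` acts by `T(y₀,y₁) = (-y₀, ξ ↦ -y₀ - ∫_ξ^0 y₁(s) ds)`. -/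
def SpecT (d : ℝ) (n : ℕ) (T : Xsp d n →L[ℝ] Xsp d n) : Prop :=
  ∀ y : Xsp d n,
    fstX (T y) = -fstX y ∧
    (sndX (T y) : ℝ → En n) =ᵐ[muD d]
      fun ξ => -fstX y - ∫ s in ξ..0, (sndX y : ℝ → En n) s


/-- The delayed-integral term `∫_{-d}^0 a(ξ) x₁(ξ) dξ ∈ ℝʰ`. -/
def delayInt {d : ℝ} {n : ℕ} (h : ℕ) (a : ℝ → Matrix (Fin h) (Fin n) ℝ)
    (x : Xsp d n) : En h :=
  ∫ ξ in (-d)..0, (WithLp.toLp 2 ((a ξ).mulVec ((sndX x : ℝ → En n) ξ)) : En h)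

theorem EuclideanSpace.norm_le_sum_abs {ι : Type*} [Fintype ι] (v : EuclideanSpace ℝ ι) :
    ‖v‖ ≤ ∑ i, |v i| := by
  classical
  calc ‖v‖ = ‖∑ i, EuclideanSpace.single i (v i)‖ := by
        congr 1; ext j; simp
    _ ≤ ∑ i, ‖EuclideanSpace.single i (v i)‖ := norm_sum_le _ _
    _ = ∑ i, |v i| := by simp

theorem abs_integral_mul_le_eLpNorm_mul_eLpNorm {α : Type*} [MeasurableSpace α] {μ : Measure α}
    {g u : α → ℝ} (hg : MemLp g 2 μ) (hu : MemLp u 2 μ) :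
    |∫ s, g s * u s ∂μ| ≤ (eLpNorm g 2 μ).toReal * (eLpNorm u 2 μ).toReal := by
  have h_inner : ∫ s, g s * u s ∂μ = ⟪hg.toLp g, hu.toLp u⟫ := by
    rw [L2.inner_def]
    refine integral_congr_ae ?_
    filter_upwards [hg.coeFn_toLp, hu.coeFn_toLp] with s hgs hus
    simp [hgs, hus, mul_comm]
  rw [h_inner, ← Lp.norm_toLp g hg, ← Lp.norm_toLp u hu]
  exact abs_real_inner_le_norm _ _

section Triangle

variable {μ : Measure ℝ} {g f : ℝ → ℝ}

theorem integrable_indicator_le_mul (hg : Integrable g μ) (hf : Integrable f μ) :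
    Integrable ({p : ℝ × ℝ | p.1 ≤ p.2}.indicator fun p => g p.1 * f p.2) (μ.prod μ) :=
  (hg.mul_prod hf).indicator (measurableSet_le measurable_fst measurable_snd)

theorem integral_indicator_le_mul_left (ξ : ℝ) :
    ∫ s, {p : ℝ × ℝ | p.1 ≤ p.2}.indicator (fun p => g p.1 * f p.2) (s, ξ) ∂μ
      = (∫ s in Iic ξ, g s ∂μ) * f ξ := by
  rw [← integral_mul_const, ← integral_indicator measurableSet_Iic]
  rfl

theorem integral_indicator_le_mul_right (s : ℝ) :
    ∫ ξ, {p : ℝ × ℝ | p.1 ≤ p.2}.indicator (fun p => g p.1 * f p.2) (s, ξ) ∂μ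
      = g s * ∫ ξ in Ici s, f ξ ∂μ := by
  rw [← integral_const_mul, ← integral_indicator measurableSet_Ici]
  rfl

variable [SFinite μ]

theorem integrable_setIntegral_Iic_mul (hg : Integrable g μ) (hf : Integrable f μ) :
    Integrable (fun ξ => (∫ s in Iic ξ, g s ∂μ) * f ξ) μ := by
  simpa only [integral_indicator_le_mul_left] using
    (integrable_indicator_le_mul hg hf).integral_prod_right

theorem integral_setIntegral_Iic_mul (hg : Integrable g μ) (hf : Integrable f μ) :
    ∫ ξ, (∫ s in Iic ξ, g s ∂μ) * f ξ ∂μ = ∫ s, g s * ∫ ξ in Ici s, f ξ ∂μ ∂μ := by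
  simp_rw [← integral_indicator_le_mul_left, ← integral_indicator_le_mul_right]
  exact (integral_integral_swap (f := fun s ξ => {p : ℝ × ℝ | p.1 ≤ p.2}.indicator
    (fun p => g p.1 * f p.2) (s, ξ)) (integrable_indicator_le_mul hg hf)).symm

end Triangle

section muD

variable {d : ℝ}

instance : IsFiniteMeasure (muD d) := by
  unfold muD; infer_instance

theorem ae_mem_Icc_muD : ∀ᵐ ξ ∂muD d, ξ ∈ Icc (-d) 0 :=
  ae_restrict_mem measurableSet_Icc

variable {E : Type*} [NormedAddCommGroup E]

theorem toReal_eLpNorm_const_muD (hd : 0 ≤ d) (c : E) :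
    (eLpNorm (fun _ => c) 2 (muD d)).toReal = √d * ‖c‖ := by
  rw [eLpNorm_const' c two_ne_zero ENNReal.ofNat_ne_top, muD, Measure.restrict_apply_univ,
    Real.volume_Icc, ENNReal.toReal_mul, ← ENNReal.toReal_rpow]
  simp [hd, Real.sqrt_eq_rpow, mul_comm]

variable [NormedSpace ℝ E]

theorem integral_muD (hd : 0 ≤ d) (f : ℝ → E) : ∫ ξ, f ξ ∂muD d = ∫ ξ in (-d)..0, f ξ := by
  rw [intervalIntegral.integral_of_le (by linarith), muD, integral_Icc_eq_integral_Ioc]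

theorem setIntegral_Iic_muD {ξ : ℝ} (hξ : ξ ∈ Icc (-d) 0) (f : ℝ → E) :
    ∫ s in Iic ξ, f s ∂muD d = ∫ s in (-d)..ξ, f s := by
  rw [intervalIntegral.integral_of_le hξ.1, ← integral_Icc_eq_integral_Ioc, muD,
    Measure.restrict_restrict measurableSet_Iic]
  congr 2
  ext t
  simp only [mem_inter_iff, mem_Iic, mem_Icc]
  grind

theorem setIntegral_Ici_muD {s : ℝ} (hs : s ∈ Icc (-d) 0) (f : ℝ → E) :
    ∫ ξ in Ici s, f ξ ∂muD d = ∫ ξ in s..0, f ξ := by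
  rw [intervalIntegral.integral_of_le hs.2, ← integral_Icc_eq_integral_Ioc, muD,
    Measure.restrict_restrict measurableSet_Ici]
  congr 2
  ext t
  simp only [mem_inter_iff, mem_Ici, mem_Icc]
  grind

variable {A g f : ℝ → ℝ}

theorem ae_eq_setIntegral_Iic_muD (hA : ∀ ξ ∈ Icc (-d) 0, A ξ = ∫ s in (-d)..ξ, g s) :
    A =ᵐ[muD d] fun ξ => ∫ s in Iic ξ, g s ∂muD d := by
  filter_upwards [ae_mem_Icc_muD] with ξ hξ
  rw [hA ξ hξ, setIntegral_Iic_muD hξ]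

theorem integrable_mul_of_eq_primitive (hA : ∀ ξ ∈ Icc (-d) 0, A ξ = ∫ s in (-d)..ξ, g s)
    (hg : Integrable g (muD d)) (hf : Integrable f (muD d)) :
    Integrable (fun ξ => A ξ * f ξ) (muD d) :=
  (integrable_setIntegral_Iic_mul hg hf).congr
    ((ae_eq_setIntegral_Iic_muD hA).mul (ae_eq_refl f)).symm

theorem integral_mul_of_eq_primitive (hA : ∀ ξ ∈ Icc (-d) 0, A ξ = ∫ s in (-d)..ξ, g s)
    (hg : Integrable g (muD d)) (hf : Integrable f (muD d)) :
    ∫ ξ, A ξ * f ξ ∂muD d = ∫ s, g s * ∫ ξ in Ici s, f ξ ∂muD d ∂muD d := by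
  rw [← integral_setIntegral_Iic_mul hg hf]
  exact integral_congr_ae ((ae_eq_setIntegral_Iic_muD hA).mul (ae_eq_refl f))

end muD

section Xsp

variable {d : ℝ} {n : ℕ}

theorem norm_fstX_le (x : Xsp d n) : ‖fstX x‖ ≤ ‖x‖ := WithLp.norm_fst_le _ x

theorem norm_sndX_le (x : Xsp d n) : ‖sndX x‖ ≤ ‖x‖ := WithLp.norm_snd_le _ x

theorem integrable_sndX_apply (x : Xsp d n) (j : Fin n) :
    Integrable (fun ξ => (sndX x : ℝ → En n) ξ j) (muD d) :=
  ((memLp_piLp_iff.1 (Lp.memLp (sndX x))) j).integrable one_le_two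

theorem toReal_eLpNorm_fstX_sub_sndX_le (hd : 0 ≤ d) (y : Xsp d n) :
    (eLpNorm (fun s => fstX y - (sndX y : ℝ → En n) s) 2 (muD d)).toReal ≤ (√d + 1) * ‖y‖ := by
  have hw := Lp.memLp (sndX y)
  calc (eLpNorm (fun s => fstX y - (sndX y : ℝ → En n) s) 2 (muD d)).toReal
      ≤ (eLpNorm (fun _ => fstX y) 2 (muD d)).toReal + (eLpNorm (sndX y) 2 (muD d)).toReal :=
        ENNReal.toReal_le_add (eLpNorm_sub_le aestronglyMeasurable_const hw.1 one_le_two)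
          (memLp_const _).eLpNorm_ne_top hw.eLpNorm_ne_top
    _ = √d * ‖fstX y‖ + ‖sndX y‖ := by rw [toReal_eLpNorm_const_muD hd, Lp.norm_def]
    _ ≤ √d * ‖y‖ + ‖y‖ := by gcongr; exacts [norm_fstX_le y, norm_sndX_le y]
    _ = (√d + 1) * ‖y‖ := by ring

theorem toReal_eLpNorm_fstX_sub_sndX_apply_le (hd : 0 ≤ d) (y : Xsp d n) (j : Fin n) :
    (eLpNorm (fun s => (fstX y - (sndX y : ℝ → En n) s) j) 2 (muD d)).toReal
      ≤ (√d + 1) * ‖y‖ := by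
  refine le_trans (ENNReal.toReal_mono ?_ ?_) (toReal_eLpNorm_fstX_sub_sndX_le hd y)
  · exact ((memLp_const _).sub (Lp.memLp (sndX y))).eLpNorm_ne_top
  · exact eLpNorm_mono fun s => PiLp.norm_apply_le _ j

theorem setIntegral_Ici_sndX_ae_eq {T : Xsp d n →L[ℝ] Xsp d n} (hT : SpecT d n T)
    (x : Xsp d n) (j : Fin n) :
    ∀ᵐ s ∂muD d, ∫ ξ in Ici s, (sndX x : ℝ → En n) ξ j ∂muD d
      = (fstX (T x) - (sndX (T x) : ℝ → En n) s) j := by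
  have hx := (Lp.memLp (sndX x)).integrable one_le_two
  filter_upwards [ae_mem_Icc_muD, (hT x).2] with s hs hTs
  rw [← eval_integral_piLp (integrable_piLp_iff.1 hx.restrict), setIntegral_Ici_muD hs, hTs,
    (hT x).1]
  simp

end Xsp

theorem abs_integral_mul_sndX_apply_le {d : ℝ} (hd : 0 ≤ d) {n : ℕ} {A g : ℝ → ℝ}
    (hA : ∀ ξ ∈ Icc (-d) 0, A ξ = ∫ s in (-d)..ξ, g s) (hg : MemLp g 2 (muD d))
    {T : Xsp d n →L[ℝ] Xsp d n} (hT : SpecT d n T) (x : Xsp d n) (j : Fin n) :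
    |∫ ξ, A ξ * (sndX x : ℝ → En n) ξ j ∂muD d|
      ≤ (eLpNorm g 2 (muD d)).toReal * ((√d + 1) * ‖T x‖) := by
  have h_parts : ∫ ξ, A ξ * (sndX x : ℝ → En n) ξ j ∂muD d
      = ∫ s, g s * (fstX (T x) - (sndX (T x) : ℝ → En n) s) j ∂muD d := by
    rw [integral_mul_of_eq_primitive hA (hg.integrable one_le_two) (integrable_sndX_apply x j)]
    refine integral_congr_ae ?_
    filter_upwards [setIntegral_Ici_sndX_ae_eq hT x j] with s hs
    rw [hs]
  have hu : MemLp (fun s => (fstX (T x) - (sndX (T x) : ℝ → En n) s) j) 2 (muD d) :=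
    memLp_piLp_iff.1 ((memLp_const _).sub (Lp.memLp _)) j
  rw [h_parts]
  refine (abs_integral_mul_le_eLpNorm_mul_eLpNorm hg hu).trans ?_
  gcongr
  exact toReal_eLpNorm_fstX_sub_sndX_apply_le hd (T x) j

theorem delayInt_apply {d : ℝ} (hd : 0 ≤ d) {n h : ℕ} {a : ℝ → Matrix (Fin h) (Fin n) ℝ}
    {x : Xsp d n} (hint : ∀ i j, Integrable (fun ξ => a ξ i j * (sndX x : ℝ → En n) ξ j) (muD d))
    (i : Fin h) :
    delayInt h a x i = ∑ j, ∫ ξ, a ξ i j * (sndX x : ℝ → En n) ξ j ∂muD d := by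
  have hrow : ∀ i, Integrable
      (fun ξ => (WithLp.toLp 2 ((a ξ).mulVec ((sndX x : ℝ → En n) ξ)) : En h) i) (muD d) :=
    fun i => by simpa [Matrix.mulVec, dotProduct] using integrable_finsetSum _ fun j _ => hint i j
  rw [delayInt, ← integral_muD hd, eval_integral_piLp hrow,
    ← integral_finsetSum _ fun j _ => hint i j]
  simp [Matrix.mulVec, dotProduct]

/-- **The delayed integral is `|·|_{-1}`-bounded.**
If every entry of the kernel `a : [-d,0] → M^{h×n}` is absolutely continuous with a.e.
derivative in `L²` and `a(-d) = 0`, then there is `C > 0` with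
`|∫_{-d}^0 a(ξ) x₁(ξ) dξ| ≤ C |Tx|_X = C |x|_{-1}` for all `x ∈ X`. -/
theorem delayInt_le_weak_norm (d : ℝ) (hd : 0 < d) (n h : ℕ)
    (a a' : ℝ → Matrix (Fin h) (Fin n) ℝ)
    (ha'L2 : ∀ i j, MemLp (fun ξ => a' ξ i j) 2 (muD d))
    (haAC : ∀ i j, ∀ ξ ∈ Icc (-d) 0, a ξ i j = a (-d) i j + ∫ s in (-d)..ξ, a' s i j)
    (ha0 : a (-d) = 0)
    (T : Xsp d n →L[ℝ] Xsp d n) (hT : SpecT d n T) :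
    ∃ C > 0, ∀ x : Xsp d n, ‖delayInt h a x‖ ≤ C * ‖T x‖ := by
  have hA : ∀ i j, ∀ ξ ∈ Icc (-d) 0, a ξ i j = ∫ s in (-d)..ξ, a' s i j := fun i j ξ hξ => by
    simpa [ha0] using haAC i j ξ hξ
  set K := ∑ i, ∑ j, (eLpNorm (fun s => a' s i j) 2 (muD d)).toReal
  refine ⟨K * (√d + 1) + 1, by positivity, fun x => ?_⟩
  have hint : ∀ i j, Integrable (fun ξ => a ξ i j * (sndX x : ℝ → En n) ξ j) (muD d) :=
    fun i j => integrable_mul_of_eq_primitive (hA i j) ((ha'L2 i j).integrable one_le_two)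
      (integrable_sndX_apply x j)
  calc ‖delayInt h a x‖ ≤ ∑ i, |delayInt h a x i| := EuclideanSpace.norm_le_sum_abs _
    _ ≤ ∑ i, ∑ j, (eLpNorm (fun s => a' s i j) 2 (muD d)).toReal * ((√d + 1) * ‖T x‖) := by
        gcongr with i
        rw [delayInt_apply hd.le hint]
        exact (Finset.abs_sum_le_sum_abs _ _).trans <| Finset.sum_le_sum fun j _ =>
          abs_integral_mul_sndX_apply_le hd.le (hA i j) (ha'L2 i j) hT x j
    _ = K * ((√d + 1) * ‖T x‖) := by simp only [K, Finset.sum_mul]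
    _ ≤ (K * (√d + 1) + 1) * ‖T x‖ := by rw [← mul_assoc]; gcongr; linarith
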